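/- Let P ⊆ Im(O') be a spacelike cross-closed 3-plane, W ⊆ P a 2-dimensional subspace, and (u,v) a q-orthonormal basis of W (q(u)=q(v)=1, ⟨u,v⟩=0). Then: (i) for every z ∈ P⊥ with q(z) = −1, the subspace ω_z := span{u+z, v+(uv)z} (octonion products) is an annihilator photon whose orthogonal projection to P equals W; (ii) conversely, every annihilator photon ω whose orthogonal projection to P equals W satisfies ω = ω_z for a unique z ∈ P⊥ with q(z) = −1. -/

import Mathlib

noncomputable section

open Quaternion

/-- The split octonions `𝕆' = ℍ × ℍ`. -/
abbrev SplitOct : Type := ℍ[ℝ] × ℍ[ℝ]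

namespace SplitOct

/-- Split octonion multiplication `(a,b)(c,d) = (ac + d̄b, da + bc̄)`. -/
def mul (x y : SplitOct) : SplitOct :=
  (x.1 * y.1 + star y.2 * x.2, y.2 * x.1 + x.2 * star y.1)

/-- Split octonion conjugation `(a,b)* = (ā, −b)`. -/
def conj (x : SplitOct) : SplitOct := (star x.1, -x.2)

lemma conj_add (x y : SplitOct) : conj (x + y) = conj x + conj y := by
  simp only [conj, Prod.fst_add, Prod.snd_add, star_add, Prod.mk_add_mk, neg_add]

lemma conj_neg (x : SplitOct) : conj (-x) = -conj x := by
  simp [conj, Prod.ext_iff]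

lemma conj_sub (x y : SplitOct) : conj (x - y) = conj x - conj y := by
  rw [sub_eq_add_neg, conj_add, conj_neg, ← sub_eq_add_neg]

lemma conj_smul (r : ℝ) (x : SplitOct) : conj (r • x) = r • conj x := by
  simp [conj, Prod.ext_iff]

lemma conj_conj (x : SplitOct) : conj (conj x) = x := by
  simp [conj]

lemma conj_zero : conj 0 = 0 := by
  simp [conj, Prod.ext_iff]

/-- The imaginary split octonions `Im 𝕆' = {x | x* = −x}`. -/
def Im : Submodule ℝ SplitOct where
  carrier := {x | conj x = -x}
  add_mem' := by
    intro a b ha hb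
    simp only [Set.mem_setOf_eq] at ha hb ⊢
    rw [conj_add, ha, hb, neg_add]
  zero_mem' := by
    simp only [Set.mem_setOf_eq, conj_zero, neg_zero]
  smul_mem' := by
    intro r a ha
    simp only [Set.mem_setOf_eq] at ha ⊢
    rw [conj_smul, ha, smul_neg]

lemma mem_Im_iff {x : SplitOct} : x ∈ Im ↔ conj x = -x := Iff.rfl

/-- `q x = x·x*`, read as a real number (its values lie in `ℝ·1 ≅ ℝ`). -/
def q (x : SplitOct) : ℝ := (mul x (conj x)).1.re

/-- The polarization `⟨x,y⟩` of the quadratic form `q`. -/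
def polar (x y : SplitOct) : ℝ := (q (x + y) - q x - q y) / 2

/-- The cross product `x × y = (xy − (xy)*)/2`. -/
def cross (x y : SplitOct) : SplitOct := (2 : ℝ)⁻¹ • (mul x y - conj (mul x y))

/-- The scalar triple product `Ω(u,v,w) = ⟨u×v, w⟩`. -/
def triple (u v w : SplitOct) : ℝ := polar (cross u v) w

lemma q_apply (x : SplitOct) : q x = normSq x.1 - normSq x.2 := by
  simp only [q, mul, conj, star_neg, neg_mul, Quaternion.self_mul_star, Quaternion.star_mul_self,
    Quaternion.re_add, Quaternion.re_neg, Quaternion.re_coe]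
  ring

lemma polar_apply (x y : SplitOct) :
    polar x y = (x.1 * star y.1).re - (x.2 * star y.2).re := by
  simp only [polar, q_apply, Prod.fst_add, Prod.snd_add, Quaternion.normSq_def',
    Quaternion.re_mul, Quaternion.re_add, Quaternion.imI_add, Quaternion.imJ_add,
    Quaternion.imK_add, Quaternion.re_star, Quaternion.imI_star, Quaternion.imJ_star,
    Quaternion.imK_star]
  ring

lemma polar_add_left (x x' y : SplitOct) : polar (x + x') y = polar x y + polar x' y := by
  simp only [polar_apply, Prod.fst_add, Prod.snd_add, add_mul, Quaternion.re_add]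
  ring

lemma polar_add_right (x y y' : SplitOct) : polar x (y + y') = polar x y + polar x y' := by
  simp only [polar_apply, Prod.fst_add, Prod.snd_add, star_add, mul_add, Quaternion.re_add]
  ring

lemma polar_smul_left (r : ℝ) (x y : SplitOct) : polar (r • x) y = r * polar x y := by
  simp only [polar_apply, Prod.smul_fst, Prod.smul_snd, smul_mul_assoc, Quaternion.re_smul,
    smul_eq_mul]
  ring

lemma polar_smul_right (r : ℝ) (x y : SplitOct) : polar x (r • y) = r * polar x y := by
  simp only [polar_apply, Prod.smul_fst, Prod.smul_snd, Quaternion.star_smul,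
    mul_smul_comm, Quaternion.re_smul, smul_eq_mul]
  ring

lemma polar_zero_left (y : SplitOct) : polar 0 y = 0 := by
  simp [polar_apply]

lemma polar_zero_right (x : SplitOct) : polar x 0 = 0 := by
  simp [polar_apply]

lemma mul_add_left (x x' y : SplitOct) : mul (x + x') y = mul x y + mul x' y := by
  simp only [mul, Prod.fst_add, Prod.snd_add, add_mul, mul_add, Prod.mk_add_mk, Prod.mk.injEq]
  constructor <;> abel

lemma mul_add_right (x y y' : SplitOct) : mul x (y + y') = mul x y + mul x y' := by
  simp only [mul, Prod.fst_add, Prod.snd_add, star_add, add_mul, mul_add, Prod.mk_add_mk,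
    Prod.mk.injEq]
  constructor <;> abel

lemma mul_smul_left (r : ℝ) (x y : SplitOct) : mul (r • x) y = r • mul x y := by
  simp only [mul, Prod.smul_fst, Prod.smul_snd, smul_mul_assoc, mul_smul_comm, Prod.smul_mk,
    smul_add]

lemma mul_smul_right (r : ℝ) (x y : SplitOct) : mul x (r • y) = r • mul x y := by
  simp only [mul, Prod.smul_fst, Prod.smul_snd, Quaternion.star_smul, smul_mul_assoc,
    mul_smul_comm, Prod.smul_mk, smul_add]

lemma mul_zero_left (y : SplitOct) : mul 0 y = 0 := by
  simp [mul, Prod.ext_iff]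

lemma mul_zero_right (x : SplitOct) : mul x 0 = 0 := by
  simp [mul, Prod.ext_iff]

lemma cross_add_left (x x' y : SplitOct) : cross (x + x') y = cross x y + cross x' y := by
  rw [cross, cross, cross, mul_add_left, conj_add]
  module

lemma cross_add_right (x y y' : SplitOct) : cross x (y + y') = cross x y + cross x y' := by
  rw [cross, cross, cross, mul_add_right, conj_add]
  module

lemma cross_smul_left (r : ℝ) (x y : SplitOct) : cross (r • x) y = r • cross x y := by
  rw [cross, cross, mul_smul_left, conj_smul]
  module

lemma cross_smul_right (r : ℝ) (x y : SplitOct) : cross x (r • y) = r • cross x y := by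
  rw [cross, cross, mul_smul_right, conj_smul]
  module

lemma cross_zero_left (y : SplitOct) : cross 0 y = 0 := by
  simp [cross, mul_zero_left, conj_zero]

lemma cross_zero_right (x : SplitOct) : cross x 0 = 0 := by
  simp [cross, mul_zero_right, conj_zero]

lemma cross_mem_Im (x y : SplitOct) : cross x y ∈ Im := by
  rw [mem_Im_iff, cross, conj_smul, conj_sub, conj_conj]
  module

lemma triple_add₁ (u u' v w : SplitOct) :
    triple (u + u') v w = triple u v w + triple u' v w := by
  rw [triple, triple, triple, cross_add_left, polar_add_left]

lemma triple_add₂ (u v v' w : SplitOct) :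
    triple u (v + v') w = triple u v w + triple u v' w := by
  rw [triple, triple, triple, cross_add_right, polar_add_left]

lemma triple_add₃ (u v w w' : SplitOct) :
    triple u v (w + w') = triple u v w + triple u v w' :=
  polar_add_right _ _ _

lemma triple_smul₁ (r : ℝ) (u v w : SplitOct) : triple (r • u) v w = r * triple u v w := by
  rw [triple, triple, cross_smul_left, polar_smul_left]

lemma triple_smul₂ (r : ℝ) (u v w : SplitOct) : triple u (r • v) w = r * triple u v w := by
  rw [triple, triple, cross_smul_right, polar_smul_left]

lemma triple_smul₃ (r : ℝ) (u v w : SplitOct) : triple u v (r • w) = r * triple u v w :=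
  polar_smul_right _ _ _

lemma triple_zero₁ (v w : SplitOct) : triple 0 v w = 0 := by
  rw [triple, cross_zero_left, polar_zero_left]

lemma triple_zero₂ (u w : SplitOct) : triple u 0 w = 0 := by
  rw [triple, cross_zero_right, polar_zero_left]

lemma triple_zero₃ (u v : SplitOct) : triple u v 0 = 0 :=
  polar_zero_right _

/-- The orthogonal complement of `P` inside the imaginary split octonions. -/
def orth (P : Submodule ℝ SplitOct) : Submodule ℝ SplitOct where
  carrier := {x | x ∈ Im ∧ ∀ y ∈ P, polar x y = 0}
  add_mem' := by
    rintro a b ⟨ha1, ha2⟩ ⟨hb1, hb2⟩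
    exact ⟨Im.add_mem ha1 hb1, fun y hy => by
      rw [polar_add_left, ha2 y hy, hb2 y hy, add_zero]⟩
  zero_mem' := ⟨Im.zero_mem, fun y _ => polar_zero_left y⟩
  smul_mem' := by
    rintro r a ⟨ha1, ha2⟩
    exact ⟨Im.smul_mem r ha1, fun y hy => by
      rw [polar_smul_left, ha2 y hy, mul_zero]⟩

/-- The annihilator `Ann x = {v ∈ Im 𝕆' | x × v = 0}`. -/
def Ann (x : SplitOct) : Submodule ℝ SplitOct where
  carrier := {v | v ∈ Im ∧ cross x v = 0}
  add_mem' := by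
    rintro a b ⟨ha1, ha2⟩ ⟨hb1, hb2⟩
    exact ⟨Im.add_mem ha1 hb1, by rw [cross_add_right, ha2, hb2, add_zero]⟩
  zero_mem' := ⟨Im.zero_mem, cross_zero_right x⟩
  smul_mem' := by
    rintro r a ⟨ha1, ha2⟩
    exact ⟨Im.smul_mem r ha1, by rw [cross_smul_right, ha2, smul_zero]⟩

/-- An isotropic line of `Im 𝕆'`. -/
def IsIsotropicLine (ℓ : Submodule ℝ SplitOct) : Prop :=
  ∃ x, x ∈ Im ∧ x ≠ 0 ∧ q x = 0 ∧ ℓ = Submodule.span ℝ {x}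

/-- An annihilator photon: a 2-dimensional totally isotropic subspace of `Im 𝕆'`
on which the cross product vanishes identically. -/
def IsAnnihilatorPhoton (ω : Submodule ℝ SplitOct) : Prop :=
  ω ≤ Im ∧ Module.finrank ℝ ω = 2 ∧ (∀ x ∈ ω, q x = 0) ∧
    ∀ x ∈ ω, ∀ y ∈ ω, cross x y = 0

/-!
Write `w = uv`; it lies in `P` because `P` is cross-closed, and left multiplication by `w`
preserves `P⊥`. For `z ∈ P⊥` the Moufang identities give `(u + z) × (v + wz) = (1 + q z) w`, so
when `q z = -1` the vectors `u + z` and `v + wz` are isotropic, orthogonal and annihilate each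
other. Conversely an annihilator photon over `W` contains vectors `u + z` and `v + z'` with
`z, z' ∈ P⊥`; isotropy forces `q z = -1`, and `x = z' - wz` satisfies `(u + z) × x = 0`, that is
`ux = -zx`, whence `q x = -q x`. As `P` is a maximal positive definite subspace of the signature
`(3,4)` space `Im 𝕆'`, the form is negative definite on `P⊥`, so `x = 0`.
-/

variable {P : Submodule ℝ SplitOct} {u v x y z z' : SplitOct}

/-- The unit of `mul`, not the `1 = (1, 1)` of the product ring `ℍ × ℍ`. -/
def unit : SplitOct := (1, 0)

lemma mul_unit (x : SplitOct) : mul x unit = x := by simp [mul, unit]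

lemma unit_mul (x : SplitOct) : mul unit x = x := by simp [mul, unit]

lemma polar_unit (x : SplitOct) : polar x unit = x.1.re := by simp [polar_apply, unit]

lemma mem_Im_iff_re : x ∈ Im ↔ x.1.re = 0 := by
  simp [mem_Im_iff, conj, Prod.ext_iff, Quaternion.ext_iff, CharZero.eq_neg_self_iff]

lemma q_add (x y : SplitOct) : q (x + y) = q x + q y + 2 * polar x y := by
  rw [polar]; ring

lemma q_smul (t : ℝ) (x : SplitOct) : q (t • x) = t ^ 2 * q x := by
  simp only [q_apply, Prod.smul_fst, Prod.smul_snd, normSq_smul]; ring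

lemma q_neg (x : SplitOct) : q (-x) = q x := by
  simp [q_apply]

lemma q_zero : q 0 = 0 := by simp [q_apply]

lemma polar_comm (x y : SplitOct) : polar x y = polar y x := by
  rw [polar, polar, add_comm x y]; ring

lemma polar_self (x : SplitOct) : polar x x = q x := by
  rw [polar, ← two_smul ℝ x, q_smul]; ring

lemma polar_neg_right (x y : SplitOct) : polar x (-y) = -polar x y := by
  rw [← neg_one_smul ℝ y, polar_smul_right]; ring

lemma polar_sub_right (x y y' : SplitOct) : polar x (y - y') = polar x y - polar x y' := by
  rw [sub_eq_add_neg, polar_add_right, polar_neg_right, sub_eq_add_neg]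

lemma mul_neg_left (x y : SplitOct) : mul (-x) y = -mul x y := by
  rw [← neg_one_smul ℝ x, mul_smul_left, neg_one_smul]

lemma mul_neg_right (x y : SplitOct) : mul x (-y) = -mul x y := by
  rw [← neg_one_smul ℝ y, mul_smul_right, neg_one_smul]

lemma mul_conj (x : SplitOct) : mul x (conj x) = q x • unit := by
  ext <;> simp only [mul, conj, unit, q_apply, normSq_def', Prod.smul_mk, re_add, imI_add, imJ_add,
    imK_add, re_mul, imI_mul, imJ_mul, imK_mul, re_star, imI_star, imJ_star, imK_star, re_neg,
    imI_neg, imJ_neg, imK_neg, re_smul, imI_smul, imJ_smul, imK_smul, re_one, imI_one, imJ_one,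
    imK_one, re_zero, imI_zero, imJ_zero, imK_zero, smul_eq_mul, smul_zero] <;> ring

lemma mul_self_of_mem_Im (hx : x ∈ Im) : mul x x = -q x • unit := by
  have h := mul_conj x
  rw [mem_Im_iff.mp hx, mul_neg_right] at h
  rw [neg_smul, ← h, neg_neg]

lemma mul_swap_of_mem_Im (hx : x ∈ Im) (hy : y ∈ Im) :
    mul y x = -mul x y - (2 * polar x y) • unit := by
  have h := mul_self_of_mem_Im (Im.add_mem hx hy)
  rw [mul_add_left, mul_add_right, mul_add_right, mul_self_of_mem_Im hx, mul_self_of_mem_Im hy,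
    q_add] at h
  linear_combination (norm := module) h

lemma conj_mul (x y : SplitOct) : conj (mul x y) = mul (conj y) (conj x) := by
  ext <;> simp only [mul, conj, re_add, imI_add, imJ_add, imK_add, re_mul, imI_mul, imJ_mul,
    imK_mul, re_star, imI_star, imJ_star, imK_star, re_neg, imI_neg, imJ_neg, imK_neg] <;> ring

lemma left_alternative (x y : SplitOct) : mul x (mul x y) = mul (mul x x) y := by
  ext <;> simp only [mul, re_add, imI_add, imJ_add, imK_add, re_mul, imI_mul, imJ_mul, imK_mul,
    re_star, imI_star, imJ_star, imK_star] <;> ring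

lemma right_alternative (x y : SplitOct) : mul (mul y x) x = mul y (mul x x) := by
  ext <;> simp only [mul, re_add, imI_add, imJ_add, imK_add, re_mul, imI_mul, imJ_mul, imK_mul,
    re_star, imI_star, imJ_star, imK_star] <;> ring

lemma flexible (x y : SplitOct) : mul (mul x y) x = mul x (mul y x) := by
  ext <;> simp only [mul, re_add, imI_add, imJ_add, imK_add, re_mul, imI_mul, imJ_mul, imK_mul,
    re_star, imI_star, imJ_star, imK_star] <;> ring

lemma moufang (x y z : SplitOct) :
    mul (mul x y) (mul z x) = mul x (mul (mul y z) x) := by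
  ext <;> simp only [mul, re_add, imI_add, imJ_add, imK_add, re_mul, imI_mul, imJ_mul, imK_mul,
    re_star, imI_star, imJ_star, imK_star] <;> ring

lemma left_alternative_linearized (x y z : SplitOct) :
    mul (mul x y) z + mul (mul y x) z = mul x (mul y z) + mul y (mul x z) := by
  ext <;> simp only [mul, Prod.fst_add, Prod.snd_add, re_add, imI_add, imJ_add, imK_add, re_mul,
    imI_mul, imJ_mul, imK_mul, re_star, imI_star, imJ_star, imK_star] <;> ring

lemma q_mul (x y : SplitOct) : q (mul x y) = q x * q y := by
  simp only [mul, q_apply, normSq_def', re_add, imI_add, imJ_add, imK_add, re_mul, imI_mul,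
    imJ_mul, imK_mul, re_star, imI_star, imJ_star, imK_star]
  ring

lemma polar_mul_left (a x y : SplitOct) : polar (mul a x) y = polar x (mul (conj a) y) := by
  simp only [mul, conj, polar_apply, star_add, star_mul, star_star, star_neg, re_add, imI_add,
    imJ_add, imK_add, re_mul, imI_mul, imJ_mul, imK_mul, re_star, imI_star, imJ_star, imK_star,
    re_neg, imI_neg, imJ_neg, imK_neg]
  ring

lemma mul_swap_of_polar_eq_zero (hx : x ∈ Im) (hy : y ∈ Im) (h : polar x y = 0) :
    mul y x = -mul x y := by
  simp [mul_swap_of_mem_Im hx hy, h]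

lemma mul_mem_Im_of_polar_eq_zero (hx : x ∈ Im) (hy : y ∈ Im) (h : polar x y = 0) :
    mul x y ∈ Im := by
  rw [mem_Im_iff, conj_mul, mem_Im_iff.mp hx, mem_Im_iff.mp hy, mul_neg_left, mul_neg_right,
    neg_neg, mul_swap_of_polar_eq_zero hx hy h]

lemma cross_eq_of_mem_Im (hx : x ∈ Im) (hy : y ∈ Im) :
    cross x y = mul x y + polar x y • unit := by
  rw [cross, conj_mul, mem_Im_iff.mp hx, mem_Im_iff.mp hy, mul_neg_left, mul_neg_right, neg_neg,
    mul_swap_of_mem_Im hx hy]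
  module

lemma cross_eq_mul_of_polar_eq_zero (hx : x ∈ Im) (hy : y ∈ Im) (h : polar x y = 0) :
    cross x y = mul x y := by
  simp [cross_eq_of_mem_Im hx hy, h]

lemma cross_self_of_mem_Im (hx : x ∈ Im) : cross x x = 0 := by
  simp [cross_eq_of_mem_Im hx hx, mul_self_of_mem_Im hx, polar_self]

lemma cross_swap_of_mem_Im (hx : x ∈ Im) (hy : y ∈ Im) : cross y x = -cross x y := by
  rw [cross_eq_of_mem_Im hx hy, cross_eq_of_mem_Im hy hx, mul_swap_of_mem_Im hx hy, polar_comm]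
  module

lemma mul_mul_self_left_of_mem_Im (hx : x ∈ Im) (y : SplitOct) : mul x (mul x y) = -q x • y := by
  rw [left_alternative, mul_self_of_mem_Im hx, mul_smul_left, unit_mul]

lemma mul_mul_self_right_of_mem_Im (hx : x ∈ Im) (y : SplitOct) :
    mul (mul y x) x = -q x • y := by
  rw [right_alternative, mul_self_of_mem_Im hx, mul_smul_right, mul_unit]

lemma mul_mul_of_polar_eq_zero (hx : x ∈ Im) (hy : y ∈ Im) (h : polar x y = 0) :
    mul y (mul x y) = q y • x := by
  rw [← flexible, mul_swap_of_polar_eq_zero hx hy h, mul_neg_left, mul_mul_self_right_of_mem_Im hy,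
    neg_smul, neg_neg]

lemma polar_mul_of_mem_Im_left (hx : x ∈ Im) (hy : y ∈ Im) : polar (mul x y) x = 0 := by
  rw [polar_mul_left, mem_Im_iff.mp hx, mul_neg_left, mul_self_of_mem_Im hx, polar_neg_right,
    polar_smul_right, polar_unit, mem_Im_iff_re.mp hy]
  ring

lemma polar_mul_of_mem_Im_right (hx : x ∈ Im) (y : SplitOct) : polar (mul x y) y = 0 := by
  have h := polar_mul_left x y y
  rw [mem_Im_iff.mp hx, mul_neg_left, polar_neg_right, polar_comm y] at h
  linarith

lemma mul_mul_left_eq_of_orthonormal (hu : u ∈ Im) (hv : v ∈ Im) (hqu : q u = 1)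
    (huv : polar u v = 0) : mul (mul u v) u = v := by
  have hw := mul_mem_Im_of_polar_eq_zero hu hv huv
  rw [mul_swap_of_polar_eq_zero hu hw (by rw [polar_comm]; exact polar_mul_of_mem_Im_left hu hv),
    mul_mul_self_left_of_mem_Im hu, hqu, neg_smul, one_smul, neg_neg]

lemma mul_mul_mul_eq_of_orthonormal (hu : u ∈ Im) (hv : v ∈ Im) (hz : z ∈ Im) (hqu : q u = 1)
    (huv : polar u v = 0) (hzu : polar z u = 0) (hzv : polar z v = 0)
    (hzw : polar z (mul u v) = 0) : mul u (mul (mul u v) z) = mul v z := by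
  have hvz : mul v z ∈ Im := mul_mem_Im_of_polar_eq_zero hv hz (by rwa [polar_comm])
  have hvzu : polar u (mul v z) = 0 := by
    rw [polar_comm, polar_mul_left, mem_Im_iff.mp hv, mul_neg_left, polar_neg_right,
      mul_swap_of_polar_eq_zero hu hv huv, polar_neg_right, hzw, neg_zero, neg_zero]
  -- As `uw = -v` and `wu = v` for `w = uv`, linearized left alternativity gives
  -- `u(wz) = -w(uz) = w(zu)`, and Moufang evaluates `(uv)(zu) = u((vz)u) = -u(u(vz)) = vz`.
  have h := left_alternative_linearized u (mul u v) z
  rw [mul_mul_self_left_of_mem_Im hu, mul_mul_left_eq_of_orthonormal hu hv hqu huv, hqu,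
    mul_swap_of_polar_eq_zero hz hu hzu, mul_neg_right, moufang,
    mul_swap_of_polar_eq_zero hu hvz hvzu, mul_neg_right, mul_mul_self_left_of_mem_Im hu, hqu,
    mul_smul_left] at h
  linear_combination (norm := module) -h

lemma cross_add_mul_mul_add (hu : u ∈ Im) (hv : v ∈ Im) (hz : z ∈ Im) (hqu : q u = 1)
    (huv : polar u v = 0) (hzu : polar z u = 0) (hzv : polar z v = 0)
    (hzw : polar z (mul u v) = 0) :
    cross (u + z) (v + mul (mul u v) z) = (1 + q z) • mul u v := by
  have hw := mul_mem_Im_of_polar_eq_zero hu hv huv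
  have hwz := mul_mem_Im_of_polar_eq_zero hw hz (by rwa [polar_comm])
  have huwz : polar u (mul (mul u v) z) = 0 := by
    rw [polar_comm, polar_mul_left, mem_Im_iff.mp hw, mul_neg_left, polar_neg_right,
      mul_mul_left_eq_of_orthonormal hu hv hqu huv, hzv, neg_zero]
  rw [cross_add_left, cross_add_right, cross_add_right, cross_eq_mul_of_polar_eq_zero hu hv huv,
    cross_eq_mul_of_polar_eq_zero hu hwz huwz, cross_eq_mul_of_polar_eq_zero hz hv hzv,
    cross_eq_mul_of_polar_eq_zero hz hwz (by rw [polar_comm]; exact polar_mul_of_mem_Im_right hw z),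
    mul_mul_mul_eq_of_orthonormal hu hv hz hqu huv hzu hzv hzw,
    mul_mul_of_polar_eq_zero hw hz (by rwa [polar_comm]),
    mul_swap_of_polar_eq_zero hv hz (by rwa [polar_comm])]
  module

lemma eq_zero_of_mem_of_mem_orth (hPpos : ∀ v ∈ P, v ≠ 0 → 0 < q v) (hxP : x ∈ P)
    (hx : x ∈ orth P) : x = 0 := by
  by_contra hx0
  have h := hPpos x hxP hx0
  rw [← polar_self, hx.2 x hxP] at h
  exact lt_irrefl 0 h

lemma mul_mem_orth (hPIm : P ≤ Im) (hPcross : ∀ u ∈ P, ∀ v ∈ P, cross u v ∈ P) (hx : x ∈ P)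
    (hz : z ∈ orth P) : mul x z ∈ orth P := by
  have hxIm := hPIm hx
  refine ⟨mul_mem_Im_of_polar_eq_zero hxIm hz.1 (by rw [polar_comm]; exact hz.2 x hx),
    fun p hp => ?_⟩
  -- `⟨xz, p⟩ = -⟨z, xp⟩`, and `xp` lies in `P + ℝ·unit` because `P` is cross-closed.
  have hxp : mul x p = cross x p - polar x p • unit := by
    rw [cross_eq_of_mem_Im hxIm (hPIm hp)]; module
  rw [polar_mul_left, mem_Im_iff.mp hxIm, mul_neg_left, polar_neg_right, hxp, polar_sub_right,
    polar_smul_right, polar_unit, mem_Im_iff_re.mp hz.1, hz.2 _ (hPcross x hx p hp)]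
  ring

lemma finrank_le_three_of_q_nonneg {U : Submodule ℝ SplitOct} (hU : U ≤ Im)
    (hq : ∀ y ∈ U, 0 ≤ q y) : Module.finrank ℝ U ≤ 3 := by
  -- The imaginary part of the first coordinate is injective on `U`, since `q (0, b) = -‖b‖²`.
  let f : SplitOct →ₗ[ℝ] ℝ × ℝ × ℝ :=
    ((QuaternionAlgebra.imIₗ _ _ _).prod
      ((QuaternionAlgebra.imJₗ _ _ _).prod (QuaternionAlgebra.imKₗ _ _ _))) ∘ₗ
      LinearMap.fst ℝ ℍ[ℝ] ℍ[ℝ]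
  have hinj : Function.Injective (f ∘ₗ U.subtype) := by
    rw [← LinearMap.ker_eq_bot, Submodule.eq_bot_iff]
    rintro ⟨y, hy⟩ hfy
    have hy1 : y.1 = 0 := Quaternion.ext _ _ (mem_Im_iff_re.mp (hU hy))
      (congrArg (·.1) hfy) (congrArg (·.2.1) hfy) (congrArg (·.2.2) hfy)
    have hy2 : y.2 = 0 := by
      have h := hq y hy
      rw [q_apply, hy1, map_zero, zero_sub, neg_nonneg] at h
      exact normSq_eq_zero.mp (le_antisymm h normSq_nonneg)
    ext : 1
    exact Prod.ext hy1 hy2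
  simpa using LinearMap.finrank_le_finrank_of_injective hinj

lemma q_neg_of_mem_orth (hPIm : P ≤ Im) (hPdim : Module.finrank ℝ P = 3)
    (hPpos : ∀ v ∈ P, v ≠ 0 → 0 < q v) (hx : x ∈ orth P) (hx0 : x ≠ 0) : q x < 0 := by
  by_contra! hqx
  have hdisj : Disjoint P (ℝ ∙ x) := Submodule.disjoint_span_singleton.mpr fun hxP =>
    eq_zero_of_mem_of_mem_orth hPpos hxP hx
  have hdim : Module.finrank ℝ ↥(P ⊔ ℝ ∙ x) = 4 := by
    have h := Submodule.finrank_sup_add_finrank_inf_eq P (ℝ ∙ x)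
    rw [disjoint_iff.mp hdisj, hPdim, finrank_span_singleton hx0, finrank_bot] at h
    omega
  have hnonneg : ∀ y ∈ P ⊔ ℝ ∙ x, 0 ≤ q y := by
    intro y hy
    obtain ⟨p, hp, _, hcx, rfl⟩ := Submodule.mem_sup.mp hy
    obtain ⟨c, rfl⟩ := Submodule.mem_span_singleton.mp hcx
    have hp0 : 0 ≤ q p := by
      rcases eq_or_ne p 0 with rfl | hp0
      · rw [q_zero]
      · exact (hPpos p hp hp0).le
    rw [q_add, q_smul, polar_smul_right, polar_comm, hx.2 p hp]
    nlinarith [sq_nonneg c]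
  have := finrank_le_three_of_q_nonneg
    (sup_le hPIm (Submodule.span_singleton_le_iff_mem _ _ |>.mpr hx.1)) hnonneg
  omega

lemma mul_mem_of_polar_eq_zero (hPIm : P ≤ Im) (hPcross : ∀ u ∈ P, ∀ v ∈ P, cross u v ∈ P)
    (hx : x ∈ P) (hy : y ∈ P) (hxy : polar x y = 0) : mul x y ∈ P :=
  cross_eq_mul_of_polar_eq_zero (hPIm hx) (hPIm hy) hxy ▸ hPcross x hx y hy

lemma finrank_span_pair_eq_two {K V : Type*} [DivisionRing K] [AddCommGroup V] [Module K V]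
    {a b : V} (h : ∀ s t : K, s • a + t • b = 0 → s = 0 ∧ t = 0) :
    Module.finrank K (Submodule.span K {a, b}) = 2 := by
  have h2 := finrank_span_eq_card (LinearIndependent.pair_iff.mpr h)
  rwa [Matrix.range_cons, Matrix.range_cons, Matrix.range_empty, Set.union_empty,
    Set.union_singleton, Set.pair_comm, Fintype.card_fin] at h2

lemma isAnnihilatorPhoton_span_pair {a b : SplitOct} (ha : a ∈ Im) (hb : b ∈ Im) (hqa : q a = 0)
    (hqb : q b = 0) (hab : polar a b = 0) (hcross : cross a b = 0)
    (hdim : Module.finrank ℝ (Submodule.span ℝ {a, b}) = 2) :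
    IsAnnihilatorPhoton (Submodule.span ℝ {a, b}) := by
  refine ⟨Submodule.span_le.mpr (Set.insert_subset ha (Set.singleton_subset_iff.mpr hb)), hdim,
    fun x hx => ?_, fun x hx y hy => ?_⟩
  · obtain ⟨s, t, rfl⟩ := Submodule.mem_span_pair.mp hx
    rw [q_add, q_smul, q_smul, polar_smul_left, polar_smul_right, hqa, hqb, hab]
    ring
  · obtain ⟨s, t, rfl⟩ := Submodule.mem_span_pair.mp hx
    obtain ⟨s', t', rfl⟩ := Submodule.mem_span_pair.mp hy
    simp [cross_add_left, cross_add_right, cross_smul_left, cross_smul_right, hcross,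
      cross_swap_of_mem_Im ha hb, cross_self_of_mem_Im ha, cross_self_of_mem_Im hb]

def projection (P ω : Submodule ℝ SplitOct) : Set SplitOct :=
  {p | p ∈ P ∧ ∃ y ∈ ω, y - p ∈ orth P}

lemma projection_span_pair (hPpos : ∀ v ∈ P, v ≠ 0 → 0 < q v) (hu : u ∈ P) (hv : v ∈ P)
    (hz : z ∈ orth P) (hz' : z' ∈ orth P) :
    projection P (Submodule.span ℝ {u + z, v + z'}) = Submodule.span ℝ {u, v} := by
  ext p
  constructor
  · rintro ⟨hp, y, hy, hyp⟩
    obtain ⟨s, t, rfl⟩ := Submodule.mem_span_pair.mp hy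
    have hdiff : s • u + t • v - p = (s • (u + z) + t • (v + z') - p) - (s • z + t • z') := by
      module
    have h0 := eq_zero_of_mem_of_mem_orth hPpos
      (P.sub_mem (P.add_mem (P.smul_mem s hu) (P.smul_mem t hv)) hp)
      (hdiff ▸ (orth P).sub_mem hyp ((orth P).add_mem ((orth P).smul_mem s hz)
        ((orth P).smul_mem t hz')))
    exact Submodule.mem_span_pair.mpr ⟨s, t, sub_eq_zero.mp h0⟩
  · intro hp
    obtain ⟨s, t, rfl⟩ := Submodule.mem_span_pair.mp hp
    refine ⟨P.add_mem (P.smul_mem s hu) (P.smul_mem t hv), s • (u + z) + t • (v + z'),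
      Submodule.mem_span_pair.mpr ⟨s, t, rfl⟩, ?_⟩
    rw [show s • (u + z) + t • (v + z') - (s • u + t • v) = s • z + t • z' by module]
    exact (orth P).add_mem ((orth P).smul_mem s hz) ((orth P).smul_mem t hz')

lemma polar_smul_add_smul_add_orth (hu : u ∈ P) (hv : v ∈ P) (hqu : q u = 1) (hqv : q v = 1)
    (huv : polar u v = 0) (hz : z ∈ orth P) (hz' : z' ∈ orth P) (s t : ℝ) :
    polar (s • (u + z) + t • (v + z')) u = s ∧ polar (s • (u + z) + t • (v + z')) v = t := by
  simp only [polar_add_left, polar_smul_left, polar_self, polar_comm v u, hqu, hqv, huv,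
    hz.2 u hu, hz.2 v hv, hz'.2 u hu, hz'.2 v hv]
  constructor <;> ring

lemma finrank_span_add_orth (hu : u ∈ P) (hv : v ∈ P) (hqu : q u = 1) (hqv : q v = 1)
    (huv : polar u v = 0) (hz : z ∈ orth P) (hz' : z' ∈ orth P) :
    Module.finrank ℝ (Submodule.span ℝ {u + z, v + z'}) = 2 :=
  finrank_span_pair_eq_two fun s t hst => by
    have h := polar_smul_add_smul_add_orth hu hv hqu hqv huv hz hz' s t
    rw [hst, polar_zero_left, polar_zero_left] at h
    exact ⟨h.1.symm, h.2.symm⟩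

lemma eq_of_add_mem_span_pair (hu : u ∈ P) (hv : v ∈ P) (hqu : q u = 1) (hqv : q v = 1)
    (huv : polar u v = 0) {z₁ : SplitOct} (hz₁ : z₁ ∈ orth P) (hz : z ∈ orth P)
    (hz' : z' ∈ orth P) (h : u + z₁ ∈ Submodule.span ℝ {u + z, v + z'}) : z₁ = z := by
  obtain ⟨s, t, hst⟩ := Submodule.mem_span_pair.mp h
  have hcoeff := polar_smul_add_smul_add_orth hu hv hqu hqv huv hz hz' s t
  rw [hst, polar_add_left, polar_add_left, polar_self, hqu, huv, hz₁.2 u hu, hz₁.2 v hv] at hcoeff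
  obtain ⟨rfl, rfl⟩ : 1 = s ∧ 0 = t := by constructor <;> linarith [hcoeff.1, hcoeff.2]
  simpa using hst.symm

lemma q_mul_eq_of_cross_add_eq_zero (hu : u ∈ Im) (hz : z ∈ Im) (hx : x ∈ Im)
    (hux : polar u x = 0) (hzx : polar z x = 0) (h : cross (u + z) x = 0) :
    q u * q x = q z * q x := by
  rw [cross_add_left, cross_eq_mul_of_polar_eq_zero hu hx hux,
    cross_eq_mul_of_polar_eq_zero hz hx hzx, add_eq_zero_iff_eq_neg] at h
  rw [← q_mul, ← q_mul, h, q_neg]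

lemma isAnnihilatorPhoton_span_add_mul (hPIm : P ≤ Im)
    (hPcross : ∀ u ∈ P, ∀ v ∈ P, cross u v ∈ P) (hu : u ∈ P) (hv : v ∈ P) (hqu : q u = 1)
    (hqv : q v = 1) (huv : polar u v = 0) (hz : z ∈ orth P) (hqz : q z = -1) :
    IsAnnihilatorPhoton (Submodule.span ℝ {u + z, v + mul (mul u v) z}) := by
  have hw := mul_mem_of_polar_eq_zero hPIm hPcross hu hv huv
  have hwz := mul_mem_orth hPIm hPcross hw hz
  refine isAnnihilatorPhoton_span_pair (Im.add_mem (hPIm hu) hz.1) (Im.add_mem (hPIm hv) hwz.1)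
    ?_ ?_ ?_ ?_ (finrank_span_add_orth hu hv hqu hqv huv hz hwz)
  · rw [q_add, hqu, hqz, polar_comm, hz.2 u hu]
    ring
  · rw [q_add, hqv, q_mul, q_mul, hqu, hqv, hqz, polar_comm, hwz.2 v hv]
    ring
  · rw [polar_add_left, polar_add_right, polar_add_right, huv, polar_comm u, hwz.2 u hu, hz.2 v hv,
      polar_comm z, polar_mul_of_mem_Im_right (hPIm hw) z]
    ring
  · rw [cross_add_mul_mul_add (hPIm hu) (hPIm hv) hz.1 hqu huv (hz.2 u hu) (hz.2 v hv) (hz.2 _ hw),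
      hqz, add_neg_cancel, zero_smul]

lemma eq_mul_of_cross_add_eq_zero (hPIm : P ≤ Im) (hPdim : Module.finrank ℝ P = 3)
    (hPpos : ∀ v ∈ P, v ≠ 0 → 0 < q v) (hPcross : ∀ u ∈ P, ∀ v ∈ P, cross u v ∈ P)
    (hu : u ∈ P) (hv : v ∈ P) (hqu : q u = 1) (huv : polar u v = 0) (hz : z ∈ orth P)
    (hz' : z' ∈ orth P) (hqz : q z = -1) (hzz' : polar z z' = 0)
    (h : cross (u + z) (v + z') = 0) : z' = mul (mul u v) z := by
  have hw := mul_mem_of_polar_eq_zero hPIm hPcross hu hv huv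
  have hx : z' - mul (mul u v) z ∈ orth P := (orth P).sub_mem hz' (mul_mem_orth hPIm hPcross hw hz)
  have hcx : cross (u + z) (z' - mul (mul u v) z) = 0 := by
    have hsplit := cross_add_right (u + z) (v + mul (mul u v) z) (z' - mul (mul u v) z)
    rw [show v + mul (mul u v) z + (z' - mul (mul u v) z) = v + z' by abel, h,
      cross_add_mul_mul_add (hPIm hu) (hPIm hv) hz.1 hqu huv (hz.2 u hu) (hz.2 v hv) (hz.2 _ hw),
      hqz, add_neg_cancel, zero_smul, zero_add] at hsplit
    exact hsplit.symm
  have hqx := q_mul_eq_of_cross_add_eq_zero (hPIm hu) hz.1 hx.1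
    (by rw [polar_comm]; exact hx.2 u hu)
    (by rw [polar_sub_right, hzz', polar_comm, polar_mul_of_mem_Im_right (hPIm hw), sub_zero]) hcx
  rw [hqu, hqz] at hqx
  by_contra hne
  exact (q_neg_of_mem_orth hPIm hPdim hPpos hx (sub_ne_zero.mpr hne)).ne (by linarith)

lemma eq_span_of_isAnnihilatorPhoton (hPIm : P ≤ Im) (hPdim : Module.finrank ℝ P = 3)
    (hPpos : ∀ v ∈ P, v ≠ 0 → 0 < q v) (hPcross : ∀ u ∈ P, ∀ v ∈ P, cross u v ∈ P)
    (hu : u ∈ P) (hv : v ∈ P) (hqu : q u = 1) (hqv : q v = 1) (huv : polar u v = 0)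
    {ω : Submodule ℝ SplitOct} (hω : IsAnnihilatorPhoton ω) (hz : z ∈ orth P)
    (hz' : z' ∈ orth P) (huz : u + z ∈ ω) (hvz' : v + z' ∈ ω) :
    q z = -1 ∧ ω = Submodule.span ℝ {u + z, v + mul (mul u v) z} := by
  obtain ⟨-, hdim, hiso, hcross⟩ := hω
  have hqz : q z = -1 := by
    have h := hiso _ huz
    rw [q_add, hqu, polar_comm, hz.2 u hu] at h
    linarith
  have hzz' : polar z z' = 0 := by
    have h : polar (u + z) (v + z') = 0 := by
      rw [polar, hiso _ (ω.add_mem huz hvz'), hiso _ huz, hiso _ hvz']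
      ring
    rwa [polar_add_left, polar_add_right, polar_add_right, huv, polar_comm u, hz'.2 u hu,
      hz.2 v hv, zero_add, zero_add, zero_add] at h
  obtain rfl := eq_mul_of_cross_add_eq_zero hPIm hPdim hPpos hPcross hu hv hqu huv hz hz' hqz hzz'
    (hcross _ huz _ hvz')
  refine ⟨hqz, (Submodule.eq_of_le_of_finrank_le ?_ ?_).symm⟩
  · exact Submodule.span_le.mpr (Set.insert_subset huz (Set.singleton_subset_iff.mpr hvz'))
  · rw [hdim, finrank_span_add_orth hu hv hqu hqv huv hz hz']

theorem annihilator_photons_over_plane_general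
    (P W : Submodule ℝ SplitOct) (hPIm : P ≤ Im)
    (hPdim : Module.finrank ℝ P = 3)
    (hPpos : ∀ v ∈ P, v ≠ 0 → 0 < q v)
    (hPcross : ∀ u ∈ P, ∀ v ∈ P, cross u v ∈ P)
    (hWP : W ≤ P)
    (u v : SplitOct) (hu : u ∈ W) (hv : v ∈ W)
    (hqu : q u = 1) (hqv : q v = 1) (huv : polar u v = 0)
    (hbasis : Submodule.span ℝ {u, v} = W) :
    (∀ z : SplitOct, z ∈ orth P → q z = -1 →
      IsAnnihilatorPhoton (Submodule.span ℝ {u + z, v + mul (mul u v) z}) ∧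
        {p : SplitOct | p ∈ P ∧
            ∃ y ∈ Submodule.span ℝ {u + z, v + mul (mul u v) z}, y - p ∈ orth P}
          = (W : Set SplitOct)) ∧
    ∀ ω : Submodule ℝ SplitOct, IsAnnihilatorPhoton ω →
      {p : SplitOct | p ∈ P ∧ ∃ y ∈ ω, y - p ∈ orth P} = (W : Set SplitOct) →
      ∃! z : SplitOct, z ∈ orth P ∧ q z = -1 ∧
        ω = Submodule.span ℝ {u + z, v + mul (mul u v) z} := by
  have huP := hWP hu
  have hvP := hWP hv
  have hwz {z : SplitOct} (hz : z ∈ orth P) : mul (mul u v) z ∈ orth P :=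
    mul_mem_orth hPIm hPcross (mul_mem_of_polar_eq_zero hPIm hPcross huP hvP huv) hz
  refine ⟨fun z hz hqz => ⟨?_, ?_⟩, fun ω hω hproj => ?_⟩
  · exact isAnnihilatorPhoton_span_add_mul hPIm hPcross huP hvP hqu hqv huv hz hqz
  · rw [← hbasis]
    exact projection_span_pair hPpos huP hvP hz (hwz hz)
  · obtain ⟨-, y₁, hy₁, hz⟩ := hproj.ge hu
    obtain ⟨-, y₂, hy₂, hz'⟩ := hproj.ge hv
    rw [← add_sub_cancel u y₁] at hy₁
    rw [← add_sub_cancel v y₂] at hy₂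
    obtain ⟨hqz, rfl⟩ := eq_span_of_isAnnihilatorPhoton hPIm hPdim hPpos hPcross huP hvP hqu hqv
      huv hω hz hz' hy₁ hy₂
    refine ⟨y₁ - u, ⟨hz, hqz, rfl⟩, fun z₁ ⟨hz₁, _, hω'⟩ => ?_⟩
    refine eq_of_add_mem_span_pair huP hvP hqu hqv huv hz₁ hz (hwz hz) ?_
    rw [hω']
    exact Submodule.subset_span (Set.mem_insert _ _)

/-- Annihilator photons projecting onto a fixed 2-plane `W` of a spacelike
cross-closed 3-plane `P` are exactly the planes `ω_z = span {u+z, v+(uv)z}` for a unique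
`z ∈ P⊥` with `q z = -1`, where `(u,v)` is a `q`-orthonormal basis of `W`. -/
theorem annihilator_photons_over_plane
    (P W : Submodule ℝ SplitOct) (hPIm : P ≤ Im)
    (hPdim : Module.finrank ℝ P = 3)
    (hPpos : ∀ v ∈ P, v ≠ 0 → 0 < q v)
    (hPcross : ∀ u ∈ P, ∀ v ∈ P, cross u v ∈ P)
    (hWP : W ≤ P) (hWdim : Module.finrank ℝ W = 2)
    (u v : SplitOct) (hu : u ∈ W) (hv : v ∈ W)
    (hqu : q u = 1) (hqv : q v = 1) (huv : polar u v = 0)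
    (hbasis : Submodule.span ℝ {u, v} = W) :
    (∀ z : SplitOct, z ∈ orth P → q z = -1 →
      IsAnnihilatorPhoton (Submodule.span ℝ {u + z, v + mul (mul u v) z}) ∧
        {p : SplitOct | p ∈ P ∧
            ∃ y ∈ Submodule.span ℝ {u + z, v + mul (mul u v) z}, y - p ∈ orth P}
          = (W : Set SplitOct)) ∧
    ∀ ω : Submodule ℝ SplitOct, IsAnnihilatorPhoton ω →
      {p : SplitOct | p ∈ P ∧ ∃ y ∈ ω, y - p ∈ orth P} = (W : Set SplitOct) →
      ∃! z : SplitOct, z ∈ orth P ∧ q z = -1 ∧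
        ω = Submodule.span ℝ {u + z, v + mul (mul u v) z} :=
  annihilator_photons_over_plane_general P W hPIm hPdim hPpos hPcross hWP u v hu hv hqu hqv huv
    hbasis

end SplitOct
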